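/- arXiv:1604.01466 — 2 statements merged into one kernel-verified Lean document; each statement's English description precedes it below -/
import Mathlib

section
/- Let α and β be positive coprime integers, δ a positive integer, and C ∈ ℂ. Then the set { (z₁,z₂) : z₁, z₂ nonzero complex numbers, z₁ + z₁⁻¹ + z₂ + z₂⁻¹ = C and z₁^{αδ}·z₂^{βδ} = 1 } equals the union over ℓ = 0, 1, …, δ−1 of the sets Z_ℓ, and the sets Z_0, …, Z_{δ−1} are pairwise disjoint. -/
/-- `χ t = exp(2πit)` -/
noncomputable def χ (t : ℂ) : ℂ := Complex.exp (2 * (Real.pi : ℂ) * Complex.I * t)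

/-- The solution set `Z_ℓ` of the reduced dispersion relation. -/
noncomputable def Zset (α β δ : ℤ) (C : ℂ) (ℓ : ℤ) : Set (ℂ × ℂ) :=
  {p : ℂ × ℂ | ∃ z : ℂ, z ≠ 0 ∧
    p.1 = z ^ β ∧ p.2 = χ ((ℓ : ℂ) / ((β : ℂ) * (δ : ℂ))) * z ^ (-α) ∧
    z ^ β + z ^ (-β) + χ (-(ℓ : ℂ) / ((β : ℂ) * (δ : ℂ))) * z ^ α
      + χ ((ℓ : ℂ) / ((β : ℂ) * (δ : ℂ))) * z ^ (-α) = C}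

lemma chi_ne_zero (t : ℂ) : χ t ≠ 0 := Complex.exp_ne_zero _

lemma chi_add (s t : ℂ) : χ (s + t) = χ s * χ t := by
  rw [χ, χ, χ, ← Complex.exp_add]; ring_nf

lemma chi_zpow (n : ℤ) (t : ℂ) : χ t ^ n = χ ((n : ℂ) * t) := by
  rw [χ, χ, ← Complex.exp_int_mul]; ring_nf

lemma chi_neg (t : ℂ) : χ (-t) = (χ t)⁻¹ := by
  rw [χ, χ, ← Complex.exp_neg]; ring_nf

lemma chi_int (n : ℤ) : χ (n : ℂ) = 1 := by
  rw [χ, Complex.exp_eq_one_iff]; exact ⟨n, by ring⟩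

lemma chi_eq_one_iff (s : ℂ) : χ s = 1 ↔ ∃ n : ℤ, s = (n : ℂ) := by
  rw [χ, Complex.exp_eq_one_iff]
  constructor
  · rintro ⟨n, h⟩
    exact ⟨n, mul_left_cancel₀ Complex.two_pi_I_ne_zero (by linear_combination h)⟩
  · rintro ⟨n, rfl⟩; exact ⟨n, by ring⟩

/-- the phase invariant of a point of `Z_ℓ` -/
lemma phase_eq (α β δ : ℤ) (ℓ : ℤ) (z : ℂ) (hz : z ≠ 0)
    (hβ : (β : ℂ) ≠ 0) (hδ : (δ : ℂ) ≠ 0) :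
    (z ^ β) ^ α * (χ ((ℓ : ℂ) / ((β : ℂ) * (δ : ℂ))) * z ^ (-α)) ^ β
      = χ ((ℓ : ℂ) / (δ : ℂ)) := by
  rw [mul_zpow, chi_zpow, ← zpow_mul, ← zpow_mul]
  have h1 : (β : ℂ) * ((ℓ : ℂ) / ((β : ℂ) * (δ : ℂ))) = (ℓ : ℂ) / (δ : ℂ) := by
    field_simp
  have h2 : z ^ (β * α) * z ^ (-α * β) = 1 := by
    rw [← zpow_add₀ hz]
    norm_num [mul_comm]
  rw [h1]
  calc z ^ (β * α) * (χ ((ℓ : ℂ) / (δ : ℂ)) * z ^ (-α * β))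
      = χ ((ℓ : ℂ) / (δ : ℂ)) * (z ^ (β * α) * z ^ (-α * β)) := by ring
    _ = χ ((ℓ : ℂ) / (δ : ℂ)) := by rw [h2, mul_one]

/-- every nonzero `δ`-th root of unity is `χ (ℓ/δ)` for some `0 ≤ ℓ < δ` -/
lemma exists_chi (δ : ℤ) (hδ : 0 < δ) (ζ : ℂ) (hζ : ζ ≠ 0) (h1 : ζ ^ δ = 1) :
    ∃ ℓ : ℤ, 0 ≤ ℓ ∧ ℓ < δ ∧ χ ((ℓ : ℂ) / (δ : ℂ)) = ζ := by
  have hδC : (δ : ℂ) ≠ 0 := Int.cast_ne_zero.mpr hδ.ne'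
  have hexp : Complex.exp ((δ : ℂ) * Complex.log ζ) = 1 := by
    rw [Complex.exp_int_mul, Complex.exp_log hζ, h1]
  rw [Complex.exp_eq_one_iff] at hexp
  obtain ⟨n, hn⟩ := hexp
  refine ⟨n % δ, Int.emod_nonneg n hδ.ne', Int.emod_lt_of_pos n hδ, ?_⟩
  have key : χ ((n : ℂ) / (δ : ℂ)) = ζ := by
    rw [χ]
    have : 2 * (Real.pi : ℂ) * Complex.I * ((n : ℂ) / (δ : ℂ)) = Complex.log ζ := by
      field_simp
      linear_combination -hn
    rw [this, Complex.exp_log hζ]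
  have hnum : ((n / δ : ℤ) : ℂ) * (δ : ℂ) + ((n % δ : ℤ) : ℂ) = (n : ℂ) := by
    exact_mod_cast congrArg (Int.cast : ℤ → ℂ)
      (by rw [mul_comm]; exact Int.mul_ediv_add_emod n δ)
  have hsplit : (n : ℂ) / (δ : ℂ) = ((n / δ : ℤ) : ℂ) + ((n % δ : ℤ) : ℂ) / (δ : ℂ) := by
    rw [← hnum, add_div, mul_div_cancel_right₀ _ hδC]
  rw [← key, hsplit, chi_add, chi_int, one_mul]

/-- the solution set of the dispersion relation for the tube is the
disjoint union of the sets `Z_ℓ`, `0 ≤ ℓ < δ`. -/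
theorem stmt_6 (α β δ : ℤ) (hα : 0 < α) (hβ : 0 < β) (hcop : IsCoprime α β)
    (hδ : 0 < δ) (C : ℂ) :
    ({p : ℂ × ℂ | p.1 ≠ 0 ∧ p.2 ≠ 0 ∧
        p.1 + p.1⁻¹ + p.2 + p.2⁻¹ = C ∧ p.1 ^ (α * δ) * p.2 ^ (β * δ) = 1}
      = ⋃ ℓ ∈ Set.Ico (0 : ℤ) δ, Zset α β δ C ℓ) ∧
    (∀ ℓ k : ℤ, 0 ≤ ℓ → ℓ < δ → 0 ≤ k → k < δ → ℓ ≠ k →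
      Disjoint (Zset α β δ C ℓ) (Zset α β δ C k)) := by
  have hβC : (β : ℂ) ≠ 0 := Int.cast_ne_zero.mpr hβ.ne'
  have hδC : (δ : ℂ) ≠ 0 := Int.cast_ne_zero.mpr hδ.ne'
  constructor
  · ext p
    simp only [Set.mem_setOf_eq, Set.mem_iUnion, Set.mem_Ico, Zset]
    constructor
    · rintro ⟨h1, h2, hC, hprod⟩
      -- ζ := p.1 ^ α * p.2 ^ β is a δ-th root of unity
      set ζ : ℂ := p.1 ^ α * p.2 ^ β with hζdef
      have hζ0 : ζ ≠ 0 := mul_ne_zero (zpow_ne_zero _ h1) (zpow_ne_zero _ h2)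
      have hζδ : ζ ^ δ = 1 := by
        rw [hζdef, mul_zpow, ← zpow_mul, ← zpow_mul]; exact hprod
      obtain ⟨ℓ, hl0, hlδ, hχ⟩ := exists_chi δ hδ ζ hζ0 hζδ
      obtain ⟨u, v, huv⟩ := hcop
      set ω : ℂ := χ ((ℓ : ℂ) / ((β : ℂ) * (δ : ℂ))) with hωdef
      have hω0 : ω ≠ 0 := chi_ne_zero _
      set b : ℂ := ω * p.2⁻¹ with hbdef
      have hb0 : b ≠ 0 := mul_ne_zero hω0 (inv_ne_zero h2)
      have hωβ : ω ^ β = χ ((ℓ : ℂ) / (δ : ℂ)) := by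
        rw [hωdef, chi_zpow]
        congr 1
        field_simp
      have hkey : p.1 ^ α = b ^ β := by
        rw [hbdef, mul_zpow, hωβ, hχ, hζdef, inv_zpow, ← zpow_neg]
        rw [mul_assoc, ← zpow_add₀ h2]
        norm_num
      set z : ℂ := p.1 ^ v * b ^ u with hzdef
      have hz0 : z ≠ 0 := mul_ne_zero (zpow_ne_zero _ h1) (zpow_ne_zero _ hb0)
      have hzβ : z ^ β = p.1 := by
        rw [hzdef, mul_zpow, ← zpow_mul, ← zpow_mul, mul_comm u β, zpow_mul b β u,
          ← hkey, ← zpow_mul, ← zpow_add₀ h1]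
        rw [show v * β + α * u = 1 by linarith [huv]]
        exact zpow_one p.1
      have hzα : z ^ α = b := by
        rw [hzdef, mul_zpow, ← zpow_mul, ← zpow_mul, mul_comm v α, zpow_mul p.1 α v,
          hkey, ← zpow_mul, ← zpow_add₀ hb0]
        rw [show β * v + u * α = 1 by linarith [huv]]
        exact zpow_one b
      have hzmα : z ^ (-α) = ω⁻¹ * p.2 := by
        rw [zpow_neg, hzα, hbdef, mul_inv, inv_inv]
      refine ⟨ℓ, ⟨hl0, hlδ⟩, z, hz0, hzβ.symm, ?_, ?_⟩
      · rw [hzmα, ← hωdef, ← mul_assoc, mul_inv_cancel₀ hω0, one_mul]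
      · have hneg : χ (-(ℓ : ℂ) / ((β : ℂ) * (δ : ℂ))) = ω⁻¹ := by
          rw [neg_div, chi_neg, hωdef]
        rw [hzβ, zpow_neg, hzβ, hzα, hzmα, ← hωdef, hneg, hbdef]
        calc p.1 + p.1⁻¹ + ω⁻¹ * (ω * p.2⁻¹) + ω * (ω⁻¹ * p.2)
            = p.1 + p.1⁻¹ + (ω⁻¹ * ω) * p.2⁻¹ + (ω * ω⁻¹) * p.2 := by ring
          _ = p.1 + p.1⁻¹ + p.2 + p.2⁻¹ := by
              rw [inv_mul_cancel₀ hω0, mul_inv_cancel₀ hω0]; ring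
          _ = C := hC
    · rintro ⟨ℓ, ⟨hl0, hlδ⟩, z, hz, h1, h2, heq⟩
      have hp1 : p.1 ≠ 0 := by rw [h1]; exact zpow_ne_zero _ hz
      have hp2 : p.2 ≠ 0 := by
        rw [h2]; exact mul_ne_zero (chi_ne_zero _) (zpow_ne_zero _ hz)
      have e1 : p.1⁻¹ = z ^ (-β) := by rw [h1, zpow_neg]
      have e2 : p.2⁻¹ = χ (-(ℓ : ℂ) / ((β : ℂ) * (δ : ℂ))) * z ^ α := by
        rw [h2, mul_inv, ← zpow_neg, neg_neg, neg_div, chi_neg]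
      refine ⟨hp1, hp2, ?_, ?_⟩
      · rw [e1, e2, h1, h2]
        linear_combination heq
      · rw [h1, h2, mul_zpow, chi_zpow]
        have harg : ((β * δ : ℤ) : ℂ) * ((ℓ : ℂ) / ((β : ℂ) * (δ : ℂ))) = (ℓ : ℂ) := by
          push_cast
          field_simp
        rw [harg, chi_int, one_mul, ← zpow_mul, ← zpow_mul, ← zpow_add₀ hz,
          show β * (α * δ) + -α * (β * δ) = 0 by ring, zpow_zero]
  · intro ℓ k hl0 hlδ hk0 hkδ hne
    rw [Set.disjoint_left]
    rintro p ⟨z, hz, hz1, hz2, -⟩ ⟨w, hw, hw1, hw2, -⟩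
    have hPl : p.1 ^ α * p.2 ^ β = χ ((ℓ : ℂ) / (δ : ℂ)) := by
      rw [hz1, hz2]; exact phase_eq α β δ ℓ z hz hβC hδC
    have hPk : p.1 ^ α * p.2 ^ β = χ ((k : ℂ) / (δ : ℂ)) := by
      rw [hw1, hw2]; exact phase_eq α β δ k w hw hβC hδC
    have h1 : χ ((ℓ : ℂ) / (δ : ℂ) + -((k : ℂ) / (δ : ℂ))) = 1 := by
      rw [chi_add, chi_neg, ← hPl, hPk, mul_inv_cancel₀]
      rw [← hPk, hPl]
      exact chi_ne_zero _
    rw [chi_eq_one_iff] at h1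
    obtain ⟨n, hn⟩ := h1
    have hC : (ℓ : ℂ) - (k : ℂ) = (n : ℂ) * (δ : ℂ) := by
      field_simp at hn
      linear_combination hn
    have hZ : ℓ - k = n * δ := by exact_mod_cast hC
    have hdvd : δ ∣ ℓ - k := ⟨n, by linarith [hZ]⟩
    have habs : |ℓ - k| < δ := by
      rw [abs_lt]; omega
    have := Int.eq_zero_of_abs_lt_dvd hdvd habs
    omega
end

section
/- Let α and β be positive coprime integers, δ a positive integer, and let z, w be nonzero complex numbers. Let ℓ and k be integers with 0 ≤ ℓ < δ and 0 ≤ k < δ. If z^β = w^β and χ(ℓ/(βδ))·z^{−α} = χ(k/(βδ))·w^{−α}, then ℓ = k. -/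
theorem χ_zpow (t : ℂ) (n : ℤ) : χ t ^ n = χ (n * t) := by
  rw [χ, χ, ← Complex.exp_int_mul]
  ring_nf

theorem χ_eq_χ_iff {s t : ℂ} : χ s = χ t ↔ ∃ n : ℤ, s = t + n := by
  simp only [χ, Complex.exp_eq_exp_iff_exists_int]
  refine exists_congr fun n => ?_
  rw [show 2 * (Real.pi : ℂ) * Complex.I * t + n * (2 * Real.pi * Complex.I)
      = 2 * Real.pi * Complex.I * (t + n) by ring]
  exact mul_right_inj' Complex.two_pi_I_ne_zero

theorem χ_zpow_div_mul {β : ℤ} (hβ : β ≠ 0) (m δ : ℂ) : χ (m / (β * δ)) ^ β = χ (m / δ) := by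
  rw [χ_zpow, mul_div_assoc', mul_div_mul_left m δ (Int.cast_ne_zero.mpr hβ)]

theorem eq_of_χ_div_eq {δ ℓ k : ℤ} (hℓ0 : 0 ≤ ℓ) (hℓδ : ℓ < δ) (hk0 : 0 ≤ k) (hkδ : k < δ)
    (h : χ (ℓ / δ) = χ (k / δ)) : ℓ = k := by
  obtain ⟨n, hn⟩ := χ_eq_χ_iff.mp h
  have hδ : (δ : ℂ) ≠ 0 := Int.cast_ne_zero.mpr (by omega)
  have hℓ : ℓ = k + n * δ := by
    rw [div_eq_iff hδ, add_mul, div_mul_cancel₀ _ hδ] at hn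
    exact_mod_cast hn
  rw [← Int.emod_eq_of_lt hℓ0 hℓδ, ← Int.emod_eq_of_lt hk0 hkδ, hℓ, Int.add_mul_emod_self_right]

theorem stmt_7_general (α β δ : ℤ) (hβ : 0 < β)
    (z w : ℂ) (hw : w ≠ 0)
    (ℓ k : ℤ) (hℓ0 : 0 ≤ ℓ) (hℓδ : ℓ < δ) (hk0 : 0 ≤ k) (hkδ : k < δ)
    (h1 : z ^ β = w ^ β)
    (h2 : χ ((ℓ : ℂ) / ((β : ℂ) * (δ : ℂ))) * z ^ (-α)
        = χ ((k : ℂ) / ((β : ℂ) * (δ : ℂ))) * w ^ (-α)) :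
    ℓ = k := by
  have h2β := congrArg (· ^ β) h2
  simp only [mul_zpow, ← zpow_mul, mul_comm (-α) β] at h2β
  rw [zpow_mul, zpow_mul, h1, χ_zpow_div_mul hβ.ne', χ_zpow_div_mul hβ.ne'] at h2β
  exact eq_of_χ_div_eq hℓ0 hℓδ hk0 hkδ
    (mul_right_cancel₀ (zpow_ne_zero _ (zpow_ne_zero _ hw)) h2β)

/-- if two parameters `z`, `w` produce the same Floquet pair for
indices `ℓ` and `k` in `[0,δ)`, then `ℓ = k`. -/
theorem stmt_7 (α β δ : ℤ) (hα : 0 < α) (hβ : 0 < β) (hcop : IsCoprime α β)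
    (hδ : 0 < δ) (z w : ℂ) (hz : z ≠ 0) (hw : w ≠ 0)
    (ℓ k : ℤ) (hℓ0 : 0 ≤ ℓ) (hℓδ : ℓ < δ) (hk0 : 0 ≤ k) (hkδ : k < δ)
    (h1 : z ^ β = w ^ β)
    (h2 : χ ((ℓ : ℂ) / ((β : ℂ) * (δ : ℂ))) * z ^ (-α)
        = χ ((k : ℂ) / ((β : ℂ) * (δ : ℂ))) * w ^ (-α)) :
    ℓ = k :=
  stmt_7_general α β δ hβ z w hw ℓ k hℓ0 hℓδ hk0 hkδ h1 h2
end
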